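/- Let e : T_X → T_Z be a π-regular operator for a subspace X ⊆ Z, and let U ⊆ X be open. Then the set V = X \ cl_Z(e(U)) ∩ X (i.e., V = X minus the trace of the closure of e(U)) is an open subset of X \ cl_X(U) which is dense in X \ cl_X(U). -/
import Mathlib


open Topology

/-- A π-regular operator for the subspace `X ⊆ Z`. -/
def IsPiRegularOp {Z : Type*} [TopologicalSpace Z] (X : Set Z) (e : Set ↥X → Set Z) : Prop :=
  (∀ U : Set ↥X, IsOpen U → IsOpen (e U)) ∧
  (∀ U V : Set ↥X, IsOpen U → IsOpen V → U ∩ V = ∅ → e U ∩ e V = ∅) ∧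
  (∀ U : Set ↥X, IsOpen U →
    (Subtype.val ⁻¹' (e U) ⊆ U ∧ U ⊆ closure (Subtype.val ⁻¹' (e U))))

/-- For a π-regular operator `e` for `X ⊆ Z` and `U ⊆ X` open, the set
`V = X \ (cl_Z (e U) ∩ X)` is an open subset of `X \ cl_X U` which is dense in
`X \ cl_X U`. -/
theorem complement_closure_dense {Z : Type*} [TopologicalSpace Z] {X : Set Z}
    {e : Set ↥X → Set Z} (he : IsPiRegularOp X e) {U : Set ↥X} (hU : IsOpen U) :
    IsOpen ((Subtype.val ⁻¹' closure (e U))ᶜ : Set ↥X) ∧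
    ((Subtype.val ⁻¹' closure (e U))ᶜ : Set ↥X) ⊆ (closure U)ᶜ ∧
    (closure U)ᶜ ⊆ closure ((Subtype.val ⁻¹' closure (e U))ᶜ : Set ↥X) := by
  obtain ⟨hopen, hdisj, htr⟩ := he
  have hclosed : IsClosed ((Subtype.val ⁻¹' closure (e U)) : Set ↥X) :=
    isClosed_closure.preimage continuous_subtype_val
  refine ⟨hclosed.isOpen_compl, ?_, ?_⟩
  · -- closure U ⊆ val⁻¹' closure (e U)
    intro x hx
    simp only [Set.mem_compl_iff] at hx ⊢
    intro hxc
    apply hx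
    have h1 : U ⊆ Subtype.val ⁻¹' closure (e U) := fun y hy =>
      continuous_subtype_val.closure_preimage_subset _ ((htr U hU).2 hy)
    exact (closure_minimal h1 hclosed) hxc
  · -- density
    intro x hx
    rw [mem_closure_iff]
    intro N hN hxN
    by_contra hempty
    push_neg at hempty
    set W : Set ↥X := N ∩ (closure U)ᶜ with hW
    have hWopen : IsOpen W := hN.inter (isClosed_closure.isOpen_compl)
    have hxW : x ∈ W := ⟨hxN, hx⟩
    have hWU : W ∩ U = ∅ := by
      ext y
      simp only [Set.mem_inter_iff, Set.mem_empty_iff_false, iff_false]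
      rintro ⟨⟨-, hy2⟩, hyU⟩
      exact hy2 (subset_closure hyU)
    have hds : e W ∩ e U = ∅ := hdisj W U hWopen hU hWU
    -- W ⊆ val⁻¹' closure (e U)
    have hWsub : W ⊆ Subtype.val ⁻¹' closure (e U) := by
      intro y hy
      by_contra hyc
      exact (Set.eq_empty_iff_forall_notMem.mp hempty y) ⟨hy.1, hyc⟩
    -- get a point of val⁻¹' e W
    have hxcl : x ∈ closure (Subtype.val ⁻¹' (e W)) := (htr W hWopen).2 hxW
    have hne : ((Subtype.val ⁻¹' (e W)) : Set ↥X).Nonempty := by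
      rcases Set.eq_empty_or_nonempty ((Subtype.val ⁻¹' (e W)) : Set ↥X) with h | h
      · rw [h, closure_empty] at hxcl; exact absurd hxcl (Set.notMem_empty x)
      · exact h
    obtain ⟨z, hz⟩ := hne
    have hzW : z ∈ W := (htr W hWopen).1 hz
    have hzcl : (z : Z) ∈ closure (e U) := hWsub hzW
    rw [mem_closure_iff] at hzcl
    obtain ⟨w, hw1, hw2⟩ := hzcl (e W) (hopen W hWopen) hz
    exact (Set.eq_empty_iff_forall_notMem.mp hds w) ⟨hw1, hw2⟩
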